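/- arXiv:math/0609515 — 3 statements merged into one kernel-verified Lean document; each statement's English description precedes it below -/
import Mathlib

section
/- If i, k ≥ 0 are integers with i ≡ k (mod r), then c_i = c_k; in particular c_{i+r} = c_i for all i ≥ 0. -/
noncomputable section

/-- The sequence `c_i` defined by `c₀ = c` and
`c_i = q·(c_{i−1} + ν − ν·q^{2(i−1)}·γ)` for `i ≥ 1`. -/
def cseq (q ν γ c : ℂ) : ℕ → ℂ
  | 0 => c
  | i + 1 => q * (cseq q ν γ c i + ν - ν * q ^ (2 * i) * γ)

/-! A sequence `x (i + 1) = F i (x i)` driven by an `r`-periodic step `F` is `r`-periodic as soon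
as it returns to its start at time `r`. Here `F i x = q (x + ν - ν γ q^{2i})`, which is
`r`-periodic in `i` because `q^r = 1`, and the closed form of `c_r` involves only `q^r = 1` and
the geometric sum `1 + q + ⋯ + q^{r-1} = 0`. -/

theorem Function.Periodic.of_recurrence {α : Type*} {x : ℕ → α} {F : ℕ → α → α} {r : ℕ}
    (hx : ∀ i, x (i + 1) = F i (x i)) (hF : Function.Periodic F r) (hr : x r = x 0) :
    Function.Periodic x r := by
  intro i
  induction i with
  | zero => simpa using hr
  | succ i ih => rw [add_right_comm, hx, hx, hF i, ih]

theorem cseq_eq_geom_sum (q ν γ c : ℂ) (i : ℕ) :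
    cseq q ν γ c i =
      q ^ i * (c - ν * γ * ∑ j ∈ Finset.range i, q ^ j) + ν * q * ∑ j ∈ Finset.range i, q ^ j := by
  induction i with
  | zero => simp [cseq]
  | succ i ih =>
    rw [cseq, ih, geom_sum_succ']
    linear_combination ν * q * geom_sum_mul q i

theorem cseq_eq_of_isPrimitiveRoot {q : ℂ} {r : ℕ} (hr : 1 < r) (hq : IsPrimitiveRoot q r)
    (ν γ c : ℂ) : cseq q ν γ c r = c := by
  simp [cseq_eq_geom_sum, hq.pow_eq_one, hq.geom_sum_eq_zero hr]

/-- If `q` is a primitive `r`-th root of unity with `r > 1`, then the sequence `c_i`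
is periodic modulo `r`: if `i ≡ k (mod r)` then `c_i = c_k`; in particular
`c_{i+r} = c_i` for all `i ≥ 0`. -/
theorem cseq_periodic (q ν γ c : ℂ) (r : ℕ) (hr : 1 < r) (hq : IsPrimitiveRoot q r) :
    (∀ i k : ℕ, i % r = k % r → cseq q ν γ c i = cseq q ν γ c k) ∧
      ∀ i : ℕ, cseq q ν γ c (i + r) = cseq q ν γ c i := by
  have hstep : Function.Periodic (fun i x => q * (x + ν - ν * q ^ (2 * i) * γ)) r := fun i => by
    simp only [mul_add, pow_add, pow_mul' q 2 r, hq.pow_eq_one, one_pow, mul_one]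
  have hper : Function.Periodic (cseq q ν γ c) r :=
    .of_recurrence (fun _ => rfl) hstep (cseq_eq_of_isPrimitiveRoot hr hq ν γ c)
  exact ⟨fun i k hik => by rw [← hper.map_mod_nat i, ← hper.map_mod_nat k, hik], hper⟩
end
end

section
/- Let η be a character of Γ with η|_Λ = ξ. Let W(η) be the r-dimensional ℂ-vector space with basis (f_i)_{i ∈ ℤ/rℤ}, and define ρ(h)·f_i = η(h)·χ₁(h)^i·f_i for h ∈ Γ and X·f_i = f_{i+1} (indices modulo r, so X·f_{r−1} = f₀). Then (W(η), ρ, X) is a B(ξ)-representation, and it is irreducible. -/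
noncomputable section

/-- `(V, ρ, X)` is a `B(ξ)`-representation: `ρ` is a group homomorphism (recorded via
multiplicativity and unitality), `ρ(h)∘X = χ₁(h)·(X∘ρ(h))` for all `h`, `X^r = id`,
and `ρ(g) = ξ(g)·id` for all `g ∈ Λ`. -/
def IsBRep {Γ : Type*} [CommGroup Γ] (χ₁ : Γ →* ℂˣ) (Λ : Subgroup Γ) (ξ : ↥Λ →* ℂˣ)
    (r : ℕ) {V : Type*} [AddCommGroup V] [Module ℂ V]
    (ρ : Γ → Module.End ℂ V) (X : Module.End ℂ V) : Prop :=
  (∀ a b : Γ, ρ (a * b) = ρ a * ρ b) ∧ ρ 1 = 1 ∧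
  (∀ h : Γ, ρ h * X = (χ₁ h : ℂ) • (X * ρ h)) ∧
  X ^ r = 1 ∧
  ∀ g : Λ, ρ (g : Γ) = (ξ g : ℂ) • (1 : Module.End ℂ V)

/-- A subspace `W` is stable under `X` and all `ρ(h)`. -/
def BStable {Γ : Type*} {V : Type*} [AddCommGroup V] [Module ℂ V]
    (ρ : Γ → Module.End ℂ V) (X : Module.End ℂ V) (W : Submodule ℂ V) : Prop :=
  (∀ v ∈ W, X v ∈ W) ∧ ∀ h : Γ, ∀ v ∈ W, ρ h v ∈ W

/-- Irreducibility: `V ≠ 0` and the only stable subspaces are `0` and `V`. -/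
def BIrred {Γ : Type*} {V : Type*} [AddCommGroup V] [Module ℂ V]
    (ρ : Γ → Module.End ℂ V) (X : Module.End ℂ V) : Prop :=
  (∃ v : V, v ≠ 0) ∧ ∀ W : Submodule ℂ V, BStable ρ X W → W = ⊥ ∨ W = ⊤

/-- The action of `h ∈ Γ` on `W(η)`, with `ρ(h)·f_i = η(h)·χ₁(h)^i·f_i` on the basis
`(f_i)_{i ∈ ℤ/rℤ}` of `ℤ/rℤ → ℂ`. -/
def wRho (r : ℕ) {Γ : Type*} [CommGroup Γ] (χ₁ η : Γ →* ℂˣ) (h : Γ) :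
    Module.End ℂ (ZMod r → ℂ) where
  toFun v := fun i => (η h : ℂ) * (χ₁ h : ℂ) ^ i.val * v i
  map_add' v w := by funext i; simp [mul_add]
  map_smul' a v := by funext i; simp [smul_eq_mul]; ring

/-- The operator `X` on `W(η)`, with `X·f_i = f_{i+1}` (indices modulo `r`). -/
def wX (r : ℕ) : Module.End ℂ (ZMod r → ℂ) where
  toFun v := fun i => v (i - 1)
  map_add' v w := rfl
  map_smul' a v := rfl

/-!
In the basis `f_i`, `ρ` acts diagonally through the characters `η · χ₁ ^ i`, which are pairwise
distinct because `χ₁` has order `r`. Averaging `ρ(h) v` against the character of `f_i`, orthogonality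
of characters shows that a stable subspace containing `v` contains `v_i f_i`; so a nonzero stable
subspace contains some `f_i`, and since `X` permutes the `f_i` cyclically it contains them all.
-/

open Function

section ZModPow

variable {M : Type*} [Monoid M] {r : ℕ} {x : M}

lemma pow_zmod_val_add [NeZero r] (hx : x ^ r = 1) (a b : ZMod r) :
    x ^ (a + b).val = x ^ a.val * x ^ b.val := by
  rw [ZMod.val_add, ← pow_eq_pow_mod _ hx, pow_add]

lemma pow_zmod_val_one (hx : x ^ r = 1) : x ^ (1 : ZMod r).val = x := by
  rw [ZMod.val_one_eq_one_mod, ← pow_eq_pow_mod _ hx, pow_one]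

lemma injective_mul_pow_zmod_val {G : Type*} [Group G] [NeZero r] {x : G} (hx : orderOf x = r)
    (y : G) : Injective fun a : ZMod r => y * x ^ a.val := by
  intro a b hab
  have hval_lt : ∀ c : ZMod r, c.val ∈ Set.Iio (orderOf x) := fun c => hx ▸ ZMod.val_lt c
  exact ZMod.val_injective r (pow_injOn_Iio_orderOf (hval_lt a) (hval_lt b) (mul_left_cancel hab))

end ZModPow

theorem Submodule.single_mem_of_character_mul_mem {G ι : Type*} [Group G] [Fintype G]
    [DecidableEq ι] {ψ : ι → G →* ℂˣ} (hψ : Injective ψ) {W : Submodule ℂ (ι → ℂ)}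
    (hW : ∀ g, ∀ v ∈ W, (fun j => (ψ j g : ℂ) * v j) ∈ W) {v : ι → ℂ} (hv : v ∈ W) (i : ι) :
    Pi.single i (v i) ∈ W := by
  have horth : ∀ j, ∑ g, (ψ i g : ℂ)⁻¹ * (ψ j g : ℂ) =
      if j = i then (Fintype.card G : ℂ) else 0 := by
    intro j
    split_ifs with hji
    · simp [hji]
    · have hne : (Units.coeHom ℂ).comp ((ψ i)⁻¹ * ψ j) ≠ 1 := fun h1 =>
        hji (hψ (inv_mul_eq_one.mp
          (MonoidHom.ext fun g => Units.ext (DFunLike.congr_fun h1 g)))).symm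
      simpa using sum_hom_units_eq_zero _ hne
  have havg : ∑ g, (ψ i g : ℂ)⁻¹ • (fun j => (ψ j g : ℂ) * v j) =
      (Fintype.card G : ℂ) • Pi.single i (v i) := by
    funext j
    simp only [Finset.sum_apply, Pi.smul_apply, smul_eq_mul, ← mul_assoc, ← Finset.sum_mul,
      horth, Pi.single_apply]
    split_ifs with hji
    · rw [hji]
    · simp
  have hcard : (Fintype.card G : ℂ) ≠ 0 := Nat.cast_ne_zero.mpr Fintype.card_ne_zero
  rw [← inv_smul_smul₀ hcard (Pi.single i (v i) : ι → ℂ), ← havg]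
  exact W.smul_mem _ (W.sum_mem fun g _ => W.smul_mem _ (hW g v hv))

section WEta

variable {r : ℕ} {Γ : Type*} [CommGroup Γ] (χ₁ η : Γ →* ℂˣ)

@[simp]
lemma wRho_apply (h : Γ) (v : ZMod r → ℂ) (i : ZMod r) :
    wRho r χ₁ η h v i = (η h : ℂ) * (χ₁ h : ℂ) ^ i.val * v i :=
  rfl

lemma wRho_apply_eq_character_mul (h : Γ) (v : ZMod r → ℂ) :
    wRho r χ₁ η h v = fun i => ((η * χ₁ ^ i.val) h : ℂ) * v i := by
  funext i
  simp

lemma wRho_mul (a b : Γ) : wRho r χ₁ η (a * b) = wRho r χ₁ η a * wRho r χ₁ η b := by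
  ext v i
  simp only [wRho_apply, map_mul, Units.val_mul, mul_pow, Module.End.mul_apply]
  ring

lemma wRho_one : wRho r χ₁ η 1 = 1 := by
  ext v i
  simp

@[simp]
lemma wX_pow_apply (n : ℕ) (v : ZMod r → ℂ) (i : ZMod r) : (wX r ^ n) v i = v (i - n) := by
  induction n generalizing i with
  | zero => simp
  | succ n ih =>
    rw [pow_succ', Module.End.mul_apply]
    change (wX r ^ n) v (i - 1) = _
    rw [ih]
    push_cast
    ring_nf

lemma wX_pow_self : wX r ^ r = 1 := by
  ext v i
  simp

lemma wX_pow_single (n : ℕ) (i : ZMod r) (c : ℂ) :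
    (wX r ^ n) (Pi.single i c) = Pi.single (i + n) c := by
  ext k
  simp only [wX_pow_apply, Pi.single_apply, sub_eq_iff_eq_add]

variable {χ₁}

lemma wRho_mul_wX [NeZero r] (hχ : χ₁ ^ r = 1) (h : Γ) :
    wRho r χ₁ η h * wX r = (χ₁ h : ℂ) • (wX r * wRho r χ₁ η h) := by
  have hχh : (χ₁ h : ℂ) ^ r = 1 := by
    rw [← Units.val_pow_eq_pow_val, ← MonoidHom.pow_apply, hχ, MonoidHom.one_apply, Units.val_one]
  refine LinearMap.ext fun v => funext fun j => ?_
  change (η h : ℂ) * (χ₁ h : ℂ) ^ j.val * v (j - 1)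
    = (χ₁ h : ℂ) * ((η h : ℂ) * (χ₁ h : ℂ) ^ (j - 1).val * v (j - 1))
  rw [← sub_add_cancel j 1, pow_zmod_val_add hχh, pow_zmod_val_one hχh, add_sub_cancel_right]
  ring

lemma wRho_of_mem {Λ : Subgroup Γ} (hΛ : ∀ g ∈ Λ, χ₁ g = 1) {ξ : Λ →* ℂˣ}
    (hη : ∀ g : Λ, η g = ξ g) (g : Λ) :
    wRho r χ₁ η g = (ξ g : ℂ) • (1 : Module.End ℂ (ZMod r → ℂ)) := by
  ext v i
  simp [hΛ g g.2, hη g]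

lemma eq_top_of_wX_stable_of_single_mem [NeZero r] {W : Submodule ℂ (ZMod r → ℂ)}
    (hX : ∀ v ∈ W, wX r v ∈ W) {i : ZMod r} {c : ℂ} (hc : c ≠ 0) (hi : Pi.single i c ∈ W) :
    W = ⊤ := by
  have hpow : ∀ n : ℕ, ∀ v ∈ W, (wX r ^ n) v ∈ W := by
    intro n
    induction n with
    | zero => simp
    | succ n ih =>
      intro v hv
      rw [pow_succ', Module.End.mul_apply]
      exact hX _ (ih v hv)
  have hsingle : ∀ j, Pi.single j (1 : ℂ) ∈ W := by
    intro j
    have := W.smul_mem c⁻¹ (hpow (j - i).val _ hi)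
    rwa [wX_pow_single, ZMod.natCast_zmod_val, add_sub_cancel, ← Pi.single_smul, smul_eq_mul,
      inv_mul_cancel₀ hc] at this
  rw [eq_top_iff, ← (Pi.basisFun ℂ (ZMod r)).span_eq, Submodule.span_le]
  rintro _ ⟨j, rfl⟩
  simpa using hsingle j

end WEta

/-- Case (II), Lemma "basic", construction: for a character `η` of `Γ` restricting to `ξ`
on `Λ`, the data `(W(η), ρ, X)` is a `B(ξ)`-representation, and it is irreducible. -/
theorem W_is_irreducible_BRep {Γ : Type*} [CommGroup Γ] [Fintype Γ] (r : ℕ) (hr : 1 < r)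
    (χ₁ : Γ →* ℂˣ) (hχ : orderOf χ₁ = r)
    (Λ : Subgroup Γ) (hΛ : ∀ g ∈ Λ, χ₁ g = 1)
    (ξ : ↥Λ →* ℂˣ) (η : Γ →* ℂˣ) (hη : ∀ g : Λ, η (g : Γ) = ξ g) :
    IsBRep χ₁ Λ ξ r (wRho r χ₁ η) (wX r) ∧ BIrred (wRho r χ₁ η) (wX r) := by
  have : NeZero r := ⟨by omega⟩
  have hχr : χ₁ ^ r = 1 := hχ ▸ pow_orderOf_eq_one χ₁
  refine ⟨⟨wRho_mul χ₁ η, wRho_one χ₁ η, wRho_mul_wX η hχr, wX_pow_self, wRho_of_mem η hΛ hη⟩,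
    ⟨1, one_ne_zero⟩, fun W hW => or_iff_not_imp_left.2 fun hbot => ?_⟩
  obtain ⟨v, hvW, hv⟩ := Submodule.exists_mem_ne_zero_of_ne_bot hbot
  obtain ⟨i, hvi⟩ := Function.ne_iff.mp hv
  have hρ : ∀ h, ∀ u ∈ W, (fun j => ((η * χ₁ ^ j.val) h : ℂ) * u j) ∈ W := fun h u hu =>
    wRho_apply_eq_character_mul χ₁ η h u ▸ hW.2 h u hu
  exact eq_top_of_wX_stable_of_single_mem hW.1 hvi
    (Submodule.single_mem_of_character_mul_mem (injective_mul_pow_zmod_val hχ η) hρ hvW i)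
end
end

section
/- Case (IV), uniqueness: If η, η' are characters of Γ with η|_Λ = η'|_Λ = ξ and the case-IV representations L(η) and L(η') are isomorphic (via a linear isomorphism intertwining X, Y and every ρ(h)), then η = η'. -/
noncomputable section

/-- `(V, ρ, X, Y)` is a representation of the common part of the rank-2 algebra `A(ξ)`:
`ρ` is a group homomorphism (recorded via multiplicativity and unitality),
`ρ(h)∘X = χ₁(h)·(X∘ρ(h))` and `ρ(h)∘Y = χ₂(h)·(Y∘ρ(h))` for all `h ∈ Γ`, and
`ρ(g) = ξ(g)·id` for all `g ∈ Λ`. -/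
def IsRep {Γ : Type*} [CommGroup Γ] (χ₁ χ₂ : Γ →* ℂˣ) (Λ : Subgroup Γ) (ξ : ↥Λ →* ℂˣ)
    {V : Type*} [AddCommGroup V] [Module ℂ V]
    (ρ : Γ → Module.End ℂ V) (X Y : Module.End ℂ V) : Prop :=
  (∀ a b : Γ, ρ (a * b) = ρ a * ρ b) ∧ ρ 1 = 1 ∧
  (∀ h : Γ, ρ h * X = (χ₁ h : ℂ) • (X * ρ h)) ∧
  (∀ h : Γ, ρ h * Y = (χ₂ h : ℂ) • (Y * ρ h)) ∧
  ∀ g : Λ, ρ (g : Γ) = (ξ g : ℂ) • (1 : Module.End ℂ V)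

/-- A subspace `W` is stable under `X`, `Y` and all `ρ(h)`. -/
def Stable2 {Γ : Type*} {V : Type*} [AddCommGroup V] [Module ℂ V]
    (ρ : Γ → Module.End ℂ V) (X Y : Module.End ℂ V) (W : Submodule ℂ V) : Prop :=
  (∀ v ∈ W, X v ∈ W) ∧ (∀ v ∈ W, Y v ∈ W) ∧ ∀ h : Γ, ∀ v ∈ W, ρ h v ∈ W

/-- Irreducibility: `V ≠ 0` and the only subspaces stable under `X`, `Y` and all `ρ(h)`
are `0` and `V`. -/
def Irred2 {Γ : Type*} {V : Type*} [AddCommGroup V] [Module ℂ V]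
    (ρ : Γ → Module.End ℂ V) (X Y : Module.End ℂ V) : Prop :=
  (∃ v : V, v ≠ 0) ∧ ∀ W : Submodule ℂ V, Stable2 ρ X Y W → W = ⊥ ∨ W = ⊤

/-- `(V, ρ, X, Y)` is a case-IV representation: a representation with in addition
`X^r = 0`, `Y^r = 0` and `X∘Y = q⁻¹·(Y∘X) + ρ(g₁g₂) − id`, where `q = χ₁(g₁)`. -/
def IsRepIV {Γ : Type*} [CommGroup Γ] (g₁ g₂ : Γ) (χ₁ χ₂ : Γ →* ℂˣ)
    (Λ : Subgroup Γ) (ξ : ↥Λ →* ℂˣ) (r : ℕ)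
    {V : Type*} [AddCommGroup V] [Module ℂ V]
    (ρ : Γ → Module.End ℂ V) (X Y : Module.End ℂ V) : Prop :=
  IsRep χ₁ χ₂ Λ ξ ρ X Y ∧ X ^ r = 0 ∧ Y ^ r = 0 ∧
    X * Y = (((χ₁ g₁ : ℂˣ) : ℂ))⁻¹ • (Y * X) + ρ (g₁ * g₂) - 1

/-- The action of `h ∈ Γ` on `L(η)`, with `ρ(h)·v_i = η(h)·χ₁(h)^i·v_i` on the basis
`v₀, …, v_{N−1}` of `Fin N → ℂ`. -/
def fRho (N : ℕ) {Γ : Type*} [CommGroup Γ] (χ₁ η : Γ →* ℂˣ) (h : Γ) :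
    Module.End ℂ (Fin N → ℂ) where
  toFun v := fun j => (η h : ℂ) * (χ₁ h : ℂ) ^ (j : ℕ) * v j
  map_add' v w := by funext j; simp [mul_add]
  map_smul' a v := by funext j; simp [smul_eq_mul]; ring

/-- The operator `X` on `L(η)`, with `X·v_i = v_{i+1}` and `v_N := 0`. -/
def fX (N : ℕ) : Module.End ℂ (Fin N → ℂ) where
  toFun v := fun j => if h : (j : ℕ) = 0 then 0
    else v ⟨(j : ℕ) - 1, lt_of_le_of_lt (Nat.sub_le _ 1) j.isLt⟩
  map_add' v w := by funext j; by_cases h : (j : ℕ) = 0 <;> simp [h]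
  map_smul' a v := by funext j; by_cases h : (j : ℕ) = 0 <;> simp [h]

/-- The operator `Y` on `L(η)`, with `Y·v_i = c_i·v_{i−1}` and `v_{−1} := 0`. -/
def fY (N : ℕ) (cs : ℕ → ℂ) : Module.End ℂ (Fin N → ℂ) where
  toFun v := fun j => if h : (j : ℕ) + 1 < N then cs ((j : ℕ) + 1) * v ⟨(j : ℕ) + 1, h⟩ else 0
  map_add' v w := by funext j; by_cases h : (j : ℕ) + 1 < N <;> simp [h, mul_add]
  map_smul' a v := by
    funext j; by_cases h : (j : ℕ) + 1 < N <;> simp [h, smul_eq_mul] <;> ring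

/-- Case (IV), uniqueness: if `η, η'` are characters of `Γ` restricting to `ξ` on `Λ`,
`N` (resp. `N'`) is the least positive integer with `c_N = 0` (resp. `c'_{N'} = 0`), and
the case-IV representations `L(η)` and `L(η')` are isomorphic via a linear isomorphism
intertwining `X`, `Y` and every `ρ(h)`, then `η = η'`. -/
theorem caseIV_uniqueness {Γ : Type*} [CommGroup Γ] [Fintype Γ] (g₁ g₂ : Γ)
    (χ₁ χ₂ : Γ →* ℂˣ) (hχ₂ : χ₂ = χ₁⁻¹) (h12 : χ₁ g₂ * χ₂ g₁ = 1)
    (r : ℕ) (hr : 1 < r) (hq : IsPrimitiveRoot ((χ₁ g₁ : ℂˣ) : ℂ) r)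
    (Λ : Subgroup Γ) (hΛ : ∀ g : Γ, g ∈ Λ ↔ (χ₁ g = 1 ∧ χ₂ g = 1)) (ξ : ↥Λ →* ℂˣ)
    (η η' : Γ →* ℂˣ) (hη : ∀ g : Λ, η (g : Γ) = ξ g) (hη' : ∀ g : Λ, η' (g : Γ) = ξ g)
    (N : ℕ) (hN : 0 < N)
    (hNzero : cseq ((χ₁ g₁ : ℂˣ) : ℂ) 1 ((η (g₁ * g₂) : ℂˣ) : ℂ) 0 N = 0)
    (hNmin : ∀ m : ℕ, 0 < m →
      cseq ((χ₁ g₁ : ℂˣ) : ℂ) 1 ((η (g₁ * g₂) : ℂˣ) : ℂ) 0 m = 0 → N ≤ m)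
    (N' : ℕ) (hN' : 0 < N')
    (hN'zero : cseq ((χ₁ g₁ : ℂˣ) : ℂ) 1 ((η' (g₁ * g₂) : ℂˣ) : ℂ) 0 N' = 0)
    (hN'min : ∀ m : ℕ, 0 < m →
      cseq ((χ₁ g₁ : ℂˣ) : ℂ) 1 ((η' (g₁ * g₂) : ℂˣ) : ℂ) 0 m = 0 → N' ≤ m)
    (φ : (Fin N → ℂ) ≃ₗ[ℂ] (Fin N' → ℂ))
    (hφX : ∀ v : Fin N → ℂ, φ (fX N v) = fX N' (φ v))
    (hφY : ∀ v : Fin N → ℂ,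
      φ (fY N (cseq ((χ₁ g₁ : ℂˣ) : ℂ) 1 ((η (g₁ * g₂) : ℂˣ) : ℂ) 0) v) =
        fY N' (cseq ((χ₁ g₁ : ℂˣ) : ℂ) 1 ((η' (g₁ * g₂) : ℂˣ) : ℂ) 0) (φ v))
    (hφρ : ∀ (h : Γ) (v : Fin N → ℂ), φ (fRho N χ₁ η h v) = fRho N' χ₁ η' h (φ v)) :
    η = η' := by
  classical
  set cs := cseq ((χ₁ g₁ : ℂˣ) : ℂ) 1 ((η (g₁ * g₂) : ℂˣ) : ℂ) 0 with hcs
  set cs' := cseq ((χ₁ g₁ : ℂˣ) : ℂ) 1 ((η' (g₁ * g₂) : ℂˣ) : ℂ) 0 with hcs'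
  set e₀ : Fin N → ℂ := fun j => if (j : ℕ) = 0 then 1 else 0 with he₀
  have hYe₀ : fY N cs e₀ = 0 := by
    funext j
    show (if h : (j : ℕ) + 1 < N then cs ((j : ℕ) + 1) * e₀ ⟨(j : ℕ) + 1, h⟩ else 0) = 0
    split
    · simp [he₀]
    · rfl
  set w := φ e₀ with hw
  have hYw : fY N' cs' w = 0 := by rw [← hφY, hYe₀, map_zero]
  have hcs'ne : ∀ m : ℕ, 0 < m → m < N' → cs' m ≠ 0 := fun m hm hmN h =>
    absurd (hN'min m hm h) (not_le.mpr hmN)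
  have hwk : ∀ k : Fin N', (k : ℕ) ≠ 0 → w k = 0 := by
    intro k hk
    have hkpos : 0 < (k : ℕ) := Nat.pos_of_ne_zero hk
    have hk1 : (k : ℕ) - 1 + 1 = (k : ℕ) := Nat.succ_pred_eq_of_pos hkpos
    have hlt : (k : ℕ) - 1 + 1 < N' := hk1 ▸ k.isLt
    have h0 := congrFun hYw ⟨(k : ℕ) - 1, lt_of_le_of_lt (Nat.sub_le _ 1) k.isLt⟩
    have h1 : (if h : (k : ℕ) - 1 + 1 < N' then
        cs' ((k : ℕ) - 1 + 1) * w ⟨(k : ℕ) - 1 + 1, h⟩ else 0) = 0 := h0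
    rw [dif_pos hlt] at h1
    have := mul_eq_zero.mp h1
    rcases this with h | h
    · exact absurd h (hcs'ne _ (Nat.succ_pos _) (hk1 ▸ k.isLt))
    · have : (⟨(k : ℕ) - 1 + 1, hlt⟩ : Fin N') = k := by
        apply Fin.ext; simp [hk1]
      rwa [this] at h
  have hw0 : w ⟨0, hN'⟩ ≠ 0 := by
    intro h0
    have hwzero : w = 0 := by
      funext k
      by_cases hk : (k : ℕ) = 0
      · have : k = ⟨0, hN'⟩ := Fin.ext hk
        rw [this]; exact h0
      · exact hwk k hk
    have : e₀ = 0 := φ.injective (by rw [map_zero, ← hw]; exact hwzero)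
    have h1 := congrFun this ⟨0, hN⟩
    simp [he₀] at h1
  have key : ∀ h : Γ, ((η h : ℂˣ) : ℂ) = ((η' h : ℂˣ) : ℂ) := by
    intro h
    have hRe₀ : fRho N χ₁ η h e₀ = ((η h : ℂˣ) : ℂ) • e₀ := by
      funext j
      show ((η h : ℂˣ) : ℂ) * ((χ₁ h : ℂˣ) : ℂ) ^ (j : ℕ) * e₀ j = _
      by_cases hj : (j : ℕ) = 0
      · simp [he₀, hj]
      · simp [he₀, hj]
    have h1 := hφρ h e₀
    rw [hRe₀, map_smul] at h1
    have h2 := congrFun h1 ⟨0, hN'⟩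
    have h3 : ((η h : ℂˣ) : ℂ) * w ⟨0, hN'⟩ =
        ((η' h : ℂˣ) : ℂ) * ((χ₁ h : ℂˣ) : ℂ) ^ (0 : ℕ) * w ⟨0, hN'⟩ := h2
    rw [pow_zero, mul_one] at h3
    exact mul_right_cancel₀ hw0 h3
  exact MonoidHom.ext fun h => Units.ext (key h)
end
end
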